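/- Let λ > 0, κ > 0, δ ∈ (0, 1), and let φ be an integrable complex-valued function on ℝ⁴. Then lim_{γ→∞} ∫∫ D_κ(γ^δ·(x⁰ − y⁰), γ·(x⃗ − y⃗))·|φ(x)|·|φ(y)| dx dy = 0, where the integral is over ℝ⁴ × ℝ⁴. -/

import Mathlib

/-! Away from the null set `x⃗ = y⃗`, the spatial part `γ (x⃗ - y⃗)` of the argument of `D_κ` grows
like `γ` while the time part `γ^δ (x⁰ - y⁰)` grows only like `γ^δ` with `δ < 1`, so the argument
becomes spacelike with `‖a⃗‖ - |a⁰| → ∞` and `D_κ → 0` pointwise. Since `0 ≤ D_κ ≤ 1`, dominated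
convergence with the integrable majorant `|φ(x)| |φ(y)|` gives the limit. -/

noncomputable section

open MeasureTheory Filter

/-- Minkowski space modeled as `ℝ × ℝ³` (time component and spatial part). -/
abbrev M : Type := ℝ × EuclideanSpace ℝ (Fin 3)

/-- The commutator-bounding function `D_κ` (with length parameter `lam`). -/
def Dkappa (lam κ : ℝ) (a : M) : ℝ :=
  if ‖a.2‖ ^ 2 ≤ a.1 ^ 2 then 1
  else lam ^ κ / (lam + ‖a.2‖ - |a.1|) ^ κ

open Topology

theorem Real.tendsto_mul_sub_mul_rpow_atTop {a : ℝ} (ha : 0 < a) (b : ℝ) {δ : ℝ} (hδ : δ < 1) :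
    Tendsto (fun γ : ℝ => a * γ - b * γ ^ δ) atTop atTop := by
  have hdecay : Tendsto (fun γ : ℝ => γ ^ (δ - 1)) atTop (𝓝 0) := by
    simpa only [neg_sub] using tendsto_rpow_neg_atTop (y := 1 - δ) (by linarith)
  have hfactor : Tendsto (fun γ : ℝ => a - b * γ ^ (δ - 1)) atTop (𝓝 a) := by
    simpa using tendsto_const_nhds.sub (hdecay.const_mul b)
  -- `a γ - b γ ^ δ = γ (a - b γ ^ (δ - 1))` for `γ > 0`
  refine (tendsto_id.atTop_mul_pos ha hfactor).congr' ?_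
  filter_upwards [eventually_gt_atTop 0] with γ hγ
  rw [Real.rpow_sub_one hγ.ne', id]
  field_simp

theorem Dkappa_eq {lam : ℝ} (hlam : 0 < lam) (κ : ℝ) (a : M) :
    Dkappa lam κ a = lam ^ κ / (lam + max (‖a.2‖ - |a.1|) 0) ^ κ := by
  simp only [Dkappa, sq_le_sq, abs_norm]
  split_ifs with h
  · rw [max_eq_right (by linarith), add_zero, div_self (Real.rpow_pos_of_pos hlam κ).ne']
  · rw [max_eq_left (by linarith), add_sub_assoc]

theorem continuous_Dkappa {lam : ℝ} (hlam : 0 < lam) (κ : ℝ) : Continuous (Dkappa lam κ) := by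
  have hpos : ∀ a : M, 0 < lam + max (‖a.2‖ - |a.1|) 0 := fun a => by positivity
  simp_rw [funext (Dkappa_eq hlam κ)]
  exact continuous_const.div
    ((by fun_prop : Continuous fun a : M => lam + max (‖a.2‖ - |a.1|) 0).rpow_const
      fun a => Or.inl (hpos a).ne')
    fun a => (Real.rpow_pos_of_pos (hpos a) κ).ne'

theorem Dkappa_nonneg {lam : ℝ} (hlam : 0 < lam) (κ : ℝ) (a : M) : 0 ≤ Dkappa lam κ a := by
  rw [Dkappa_eq hlam]
  positivity

theorem Dkappa_le_one {lam κ : ℝ} (hlam : 0 < lam) (hκ : 0 ≤ κ) (a : M) :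
    Dkappa lam κ a ≤ 1 := by
  rw [Dkappa_eq hlam, div_le_one (by positivity)]
  exact Real.rpow_le_rpow hlam.le (le_add_of_nonneg_right (le_max_right _ _)) hκ

theorem tendsto_Dkappa_of_tendsto_atTop {ι : Type*} {l : Filter ι} {lam κ : ℝ} (hlam : 0 < lam)
    (hκ : 0 < κ) {a : ι → M} (ha : Tendsto (fun i => ‖(a i).2‖ - |(a i).1|) l atTop) :
    Tendsto (fun i => Dkappa lam κ (a i)) l (𝓝 0) := by
  simp_rw [Dkappa_eq hlam]
  refine tendsto_const_nhds.div_atTop ((tendsto_rpow_atTop hκ).comp ?_)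
  exact tendsto_atTop_add_const_left _ lam
    (tendsto_atTop_mono (fun i => le_max_left _ _) ha)

theorem tendsto_Dkappa_scaling {lam κ δ : ℝ} (hlam : 0 < lam) (hκ : 0 < κ) (hδ : δ < 1) (t : ℝ)
    {d : EuclideanSpace ℝ (Fin 3)} (hd : d ≠ 0) :
    Tendsto (fun γ : ℝ => Dkappa lam κ (γ ^ δ * t, γ • d)) atTop (𝓝 0) := by
  refine tendsto_Dkappa_of_tendsto_atTop hlam hκ
    ((Real.tendsto_mul_sub_mul_rpow_atTop (norm_pos_iff.mpr hd) |t| hδ).congr' ?_)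
  filter_upwards [eventually_ge_atTop 0] with γ hγ
  simp only [norm_smul, Real.norm_of_nonneg hγ, abs_mul, abs_of_nonneg (Real.rpow_nonneg hγ δ)]
  ring

theorem volume_setOf_snd_eq (v : EuclideanSpace ℝ (Fin 3)) : volume {y : M | y.2 = v} = 0 := by
  have : {y : M | y.2 = v} = Set.univ ×ˢ {v} := by ext y; simp
  rw [this, Measure.volume_eq_prod, Measure.prod_prod, measure_singleton, mul_zero]

theorem ae_snd_ne_snd : ∀ᵐ p : M × M, p.1.2 ≠ p.2.2 := by
  have hS : MeasurableSet {p : M × M | p.1.2 = p.2.2} :=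
    measurableSet_eq_fun (by fun_prop) (by fun_prop)
  rw [ae_iff]
  simp only [ne_eq, not_not]
  rw [Measure.volume_eq_prod, Measure.measure_prod_null hS]
  exact Eventually.of_forall fun x => by simpa [eq_comm] using volume_setOf_snd_eq x.2

theorem tendsto_integral_integral_of_norm_kernel_le_one {ι X Y : Type*} [MeasurableSpace X]
    [MeasurableSpace Y] {μ : Measure X} {ν : Measure Y} [SFinite μ] [SFinite ν]
    {l : Filter ι} [l.IsCountablyGenerated] {K : ι → X × Y → ℝ}
    (hK_meas : ∀ i, AEStronglyMeasurable (K i) (μ.prod ν)) (hK_le : ∀ i p, ‖K i p‖ ≤ 1)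
    (hK_lim : ∀ᵐ p ∂μ.prod ν, Tendsto (fun i => K i p) l (𝓝 0))
    {f : X → ℝ} {g : Y → ℝ} (hf : Integrable f μ) (hg : Integrable g ν) :
    Tendsto (fun i => ∫ x, ∫ y, K i (x, y) * (f x * g y) ∂ν ∂μ) l (𝓝 0) := by
  have hfg : Integrable (fun p : X × Y => f p.1 * g p.2) (μ.prod ν) := hf.mul_prod hg
  have hbound : ∀ i, ∀ᵐ p ∂μ.prod ν, ‖K i p * (f p.1 * g p.2)‖ ≤ ‖f p.1 * g p.2‖ :=
    fun i => Eventually.of_forall fun p => by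
      rw [norm_mul]
      exact mul_le_of_le_one_left (norm_nonneg _) (hK_le i p)
  have hint : ∀ i, Integrable (fun p => K i p * (f p.1 * g p.2)) (μ.prod ν) := fun i =>
    hfg.norm.mono' ((hK_meas i).mul hfg.aestronglyMeasurable) (hbound i)
  simp_rw [fun i => integral_integral (f := fun x y => K i (x, y) * (f x * g y)) (hint i)]
  have := tendsto_integral_filter_of_dominated_convergence _
    (Eventually.of_forall fun i => (hK_meas i).mul hfg.aestronglyMeasurable)
    (Eventually.of_forall hbound) hfg.norm
    (hK_lim.mono fun p hp => by simpa using hp.mul_const (f p.1 * g p.2))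
  rwa [integral_zero] at this

/-- For integrable `φ` on `ℝ⁴` and `δ ∈ (0,1)`:
`∫∫ D_κ(γ^δ(x⁰−y⁰), γ(x⃗−y⃗)) |φ(x)| |φ(y)| dx dy → 0` as `γ → ∞`. -/
theorem stmt17 (lam κ δ : ℝ) (hlam : 0 < lam) (hκ : 0 < κ) (hδ : δ ∈ Set.Ioo (0 : ℝ) 1)
    (φ : M → ℂ) (hφ : Integrable φ) :
    Tendsto (fun γ : ℝ => ∫ x : M, ∫ y : M,
        Dkappa lam κ (γ ^ δ * (x.1 - y.1), γ • (x.2 - y.2)) * (‖φ x‖ * ‖φ y‖))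
      atTop (nhds 0) := by
  set K : ℝ → M × M → ℝ := fun γ p =>
    Dkappa lam κ (γ ^ δ * (p.1.1 - p.2.1), γ • (p.1.2 - p.2.2))
  have hK_meas (γ : ℝ) : AEStronglyMeasurable (K γ) (volume.prod volume) :=
    ((continuous_Dkappa hlam κ).comp (by fun_prop)).aestronglyMeasurable
  have hK_le (γ : ℝ) (p : M × M) : ‖K γ p‖ ≤ 1 := by
    rw [Real.norm_of_nonneg (Dkappa_nonneg hlam κ _)]
    exact Dkappa_le_one hlam hκ.le _
  have hK_lim : ∀ᵐ p ∂(volume.prod volume), Tendsto (fun γ => K γ p) atTop (nhds 0) := by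
    rw [← Measure.volume_eq_prod]
    exact ae_snd_ne_snd.mono fun p hp =>
      tendsto_Dkappa_scaling hlam hκ hδ.2 _ (sub_ne_zero.mpr hp)
  exact tendsto_integral_integral_of_norm_kernel_le_one hK_meas hK_le hK_lim hφ.norm hφ.norm
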